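/- Let φ be a bounded measurable function of X. Under the model P(Y=1|A,X) = expit(β₀A + r₀(X)), for any measurable function m of X, E[φ(X) e^{-r₀(X)} (Y e^{-β₀A} - (1-Y)e^{r₀(X)})(A - m(X))] = 0. -/

import Mathlib

open MeasureTheory Real

noncomputable def expit (t : ℝ) : ℝ := 1 / (1 + Real.exp (-t))

/-! The integrand is `w(A, X) * (Y - expit (β₀ A + r₀ X))` with the weight
`w(a, x) = φ(x) e^{-r₀(x)} (e^{-β₀ a} + e^{r₀(x)}) (a - m(x))`, and by the model the second
factor is `Y - E[Y | A, X]`. Since `w(A, X)` is `σ(A, X)`-measurable it pulls out of the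
conditional expectation, whose remaining factor vanishes; the tower property then makes the
whole expectation zero. -/

lemma expit_pos (t : ℝ) : 0 < expit t := by
  unfold expit
  positivity

/-- Holds because `e^{-a} + e^r = e^r (1 + e^{-(a + r)}) = e^r / expit (a + r)`. -/
lemma exp_add_exp_mul_sub_expit (a r y : ℝ) :
    (exp (-a) + exp r) * (y - expit (a + r)) = y * exp (-a) - (1 - y) * exp r := by
  have hden : (1 : ℝ) + (exp a)⁻¹ * (exp r)⁻¹ ≠ 0 := by positivity
  simp only [expit, neg_add, exp_add, exp_neg]
  field_simp
  ring

namespace MeasureTheory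

variable {Ω : Type*} {m m₀ : MeasurableSpace Ω} {μ : Measure Ω} {f Y g : Ω → ℝ}

lemma integrable_of_condExp_ae_eq_pos [NeZero μ] (h : μ[Y | m] =ᵐ[μ] g)
    (hg : ∀ ω, 0 < g ω) : Integrable Y μ := by
  by_contra hY
  rw [condExp_of_not_integrable hY] at h
  obtain ⟨ω, hω⟩ := h.exists
  exact (hg ω).ne hω

lemma condExp_sub_condExp_ae_eq_zero (hm : m ≤ m₀) [SigmaFinite (μ.trim hm)]
    (hY : Integrable Y μ) : μ[Y - μ[Y | m] | m] =ᵐ[μ] 0 := by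
  filter_upwards [condExp_sub hY (integrable_condExp (m := m) (f := Y)) m,
    condExp_condExp_of_le (f := Y) le_rfl hm] with ω hsub htower
  simp [hsub, htower]

lemma integral_mul_sub_condExp_eq_zero (hm : m ≤ m₀) [SigmaFinite (μ.trim hm)]
    (hf : StronglyMeasurable[m] f) (hY : Integrable Y μ)
    (hfY : Integrable (f * (Y - μ[Y | m])) μ) :
    ∫ ω, f ω * (Y ω - μ[Y | m] ω) ∂μ = 0 := by
  have hpull := condExp_mul_of_stronglyMeasurable_left hf hfY (hY.sub integrable_condExp)
  calc ∫ ω, f ω * (Y ω - μ[Y | m] ω) ∂μ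
      = ∫ ω, μ[f * (Y - μ[Y | m]) | m] ω ∂μ := (integral_condExp hm).symm
    _ = 0 := by
      rw [← integral_zero Ω ℝ]
      refine integral_congr_ae ?_
      filter_upwards [hpull, condExp_sub_condExp_ae_eq_zero hm hY] with ω h1 h2
      simp [h1, h2]

end MeasureTheory

theorem stmt_12_general {Ω S : Type*} [MeasurableSpace Ω] [MeasurableSpace S]
    (μ : Measure Ω) [IsProbabilityMeasure μ]
    (Y A : Ω → ℝ) (X : Ω → S) (β₀ : ℝ) (r₀ m φ : S → ℝ)
    (hA : Measurable A) (hX : Measurable X) (hr : Measurable r₀)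
    (hm : Measurable m) (hφ : Measurable φ)
    (hmodel : μ[Y | MeasurableSpace.comap (fun ω => (A ω, X ω)) inferInstance]
      =ᵐ[μ] fun ω => expit (β₀ * A ω + r₀ (X ω)))
    (hint : Integrable (fun ω =>
      φ (X ω) * Real.exp (-(r₀ (X ω)))
        * (Y ω * Real.exp (-(β₀ * A ω)) - (1 - Y ω) * Real.exp (r₀ (X ω)))
        * (A ω - m (X ω))) μ) :
    ∫ ω, φ (X ω) * Real.exp (-(r₀ (X ω)))
      * (Y ω * Real.exp (-(β₀ * A ω)) - (1 - Y ω) * Real.exp (r₀ (X ω)))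
      * (A ω - m (X ω)) ∂μ = 0 := by
  have hG := (hA.prodMk hX).comap_le
  set G := MeasurableSpace.comap (fun ω => (A ω, X ω)) inferInstance
  set w : ℝ × S → ℝ := fun p =>
    φ p.2 * exp (-r₀ p.2) * (exp (-(β₀ * p.1)) + exp (r₀ p.2)) * (p.1 - m p.2)
  have hw : StronglyMeasurable[G] (w ∘ fun ω => (A ω, X ω)) :=
    ((by fun_prop : Measurable w).comp (comap_measurable _)).stronglyMeasurable
  have hYint : Integrable Y μ := integrable_of_condExp_ae_eq_pos hmodel fun _ => expit_pos _
  have hresidual : (fun ω => φ (X ω) * exp (-(r₀ (X ω)))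
      * (Y ω * exp (-(β₀ * A ω)) - (1 - Y ω) * exp (r₀ (X ω))) * (A ω - m (X ω)))
      =ᵐ[μ] (w ∘ fun ω => (A ω, X ω)) * (Y - μ[Y | G]) := by
    filter_upwards [hmodel] with ω hω
    simp only [Function.comp_apply, Pi.mul_apply, Pi.sub_apply, hω, w]
    rw [← exp_add_exp_mul_sub_expit]
    ring
  rw [integral_congr_ae hresidual]
  exact integral_mul_sub_condExp_eq_zero hG hw hYint (hint.congr hresidual)

theorem stmt_12 {Ω S : Type*} [MeasurableSpace Ω] [MeasurableSpace S]
    (μ : Measure Ω) [IsProbabilityMeasure μ]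
    (Y A : Ω → ℝ) (X : Ω → S) (β₀ : ℝ) (r₀ m φ : S → ℝ)
    (hY : ∀ ω, Y ω = 0 ∨ Y ω = 1)
    (hA : Measurable A) (hX : Measurable X) (hr : Measurable r₀)
    (hm : Measurable m) (hφ : Measurable φ)
    (hφbd : ∃ C : ℝ, ∀ x, |φ x| ≤ C)
    (hmodel : μ[Y | MeasurableSpace.comap (fun ω => (A ω, X ω)) inferInstance]
      =ᵐ[μ] fun ω => expit (β₀ * A ω + r₀ (X ω)))
    (hint : Integrable (fun ω =>
      φ (X ω) * Real.exp (-(r₀ (X ω)))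
        * (Y ω * Real.exp (-(β₀ * A ω)) - (1 - Y ω) * Real.exp (r₀ (X ω)))
        * (A ω - m (X ω))) μ) :
    ∫ ω, φ (X ω) * Real.exp (-(r₀ (X ω)))
      * (Y ω * Real.exp (-(β₀ * A ω)) - (1 - Y ω) * Real.exp (r₀ (X ω)))
      * (A ω - m (X ω)) ∂μ = 0 :=
  stmt_12_general μ Y A X β₀ r₀ m φ hA hX hr hm hφ hmodel hint
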